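/- arXiv:2404.01666 — 2 statements merged into one kernel-verified Lean document; each statement's English description precedes it below -/
import Mathlib

section
/- There is an absolute constant C such that the following holds. In the setting of the nonlinear exponential family below, let F : ℝ → ℝ be twice differentiable with ‖F‖_∞ ≤ 2, ‖F'‖_∞ ≤ 2 and ‖F''‖_∞ ≤ 2. Define I = (1/a) E[(f(X) − E f(X)) h(X) F(f(X))], I₁ = (1/(2a)) Σ_{i=1}^N E[h(X) F'(f(X)) (f(X) − f(X^(i))) (f(X^[i]) − f(X^[i−1]))], and I₂ = (1/(2a)) Σ_{i=1}^N E[h(X) F(f(X)) (g(X) − g(X^(i))) (f(X^[i]) − f(X^[i−1]))]. Then |I − I₁ − I₂| ≤ C δ₁. -/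
open MeasureTheory ProbabilityTheory Real

noncomputable section

/-- The vector `X^[i]`: the first `i` coordinates from `x`, the rest from `x'`. -/
def mixVec {N : ℕ} (i : ℕ) (x x' : Fin N → ℝ) : Fin N → ℝ :=
  fun j => if (j : ℕ) < i then x j else x' j

/-- The vector `X^(i)`: the coordinate `i` of `x` is replaced by `x' i`. -/
def swapVec {N : ℕ} (i : Fin N) (x x' : Fin N → ℝ) : Fin N → ℝ :=
  Function.update x i (x' i)

/-- The normalizing constant `a = E exp (g (X))`. -/
def aConst {N : ℕ} (μ : Measure (Fin N → ℝ)) (g : (Fin N → ℝ) → ℝ) : ℝ :=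
  ∫ x, Real.exp (g x) ∂μ

/-- The law of `Y`, i.e. the law of `X` tilted by the density `exp (g x) / a`. -/
def tiltedMeasure {N : ℕ} (μ : Measure (Fin N → ℝ)) (g : (Fin N → ℝ) → ℝ) :
    Measure (Fin N → ℝ) :=
  μ.withDensity fun x => ENNReal.ofReal (Real.exp (g x) / aConst μ g)

/-- `Δ_{1,i}(x) = (1/2) E[(f(X)−f(X^(i)))(f(X^[i])−f(X^[i−1])) | X = x]`
(here `i : Fin N` is the 0-based version of the 1-based index of the paper). -/
def Delta1 {N : ℕ} (μ : Measure (Fin N → ℝ)) (f : (Fin N → ℝ) → ℝ) (i : Fin N)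
    (x : Fin N → ℝ) : ℝ :=
  (1 / 2) * ∫ x', (f x - f (swapVec i x x')) *
    (f (mixVec ((i : ℕ) + 1) x x') - f (mixVec (i : ℕ) x x')) ∂μ

/-- `Δ_{2,i}(x) = (1/2) E[(g(X)−g(X^(i)))(f(X^[i])−f(X^[i−1])) | X = x]`. -/
def Delta2 {N : ℕ} (μ : Measure (Fin N → ℝ)) (g f : (Fin N → ℝ) → ℝ) (i : Fin N)
    (x : Fin N → ℝ) : ℝ :=
  (1 / 2) * ∫ x', (g x - g (swapVec i x x')) *
    (f (mixVec ((i : ℕ) + 1) x x') - f (mixVec (i : ℕ) x x')) ∂μ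

/-- `b = E Σ_i Δ_{1,i}(Y)`. -/
def bConst {N : ℕ} (μ : Measure (Fin N → ℝ)) (g f : (Fin N → ℝ) → ℝ) : ℝ :=
  ∫ y, ∑ i, Delta1 μ f i y ∂(tiltedMeasure μ g)

/-- The integrand (as a function of `(x, x')`) of the first sum in `δ₁`. -/
def delta1aFn {N : ℕ} (g f : (Fin N → ℝ) → ℝ) (i : Fin N) :
    (Fin N → ℝ) × (Fin N → ℝ) → ℝ := fun q =>
  Real.exp (g q.1) * (f q.1 - f (swapVec i q.1 q.2)) ^ 2 *
    |f (mixVec ((i : ℕ) + 1) q.1 q.2) - f (mixVec (i : ℕ) q.1 q.2)|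

/-- The integrand (as a function of `(x, x')`) of the second sum in `δ₁`. -/
def delta1bFn {N : ℕ} (g f : (Fin N → ℝ) → ℝ) (i : Fin N) :
    (Fin N → ℝ) × (Fin N → ℝ) → ℝ := fun q =>
  Real.exp (g q.1) * Real.exp |g q.1 - g (swapVec i q.1 q.2)| *
    (g q.1 - g (swapVec i q.1 q.2)) ^ 2 *
    (|g q.1 - g (swapVec i q.1 q.2)| + |f q.1 - f (swapVec i q.1 q.2)|) *
    |f (mixVec ((i : ℕ) + 1) q.1 q.2) - f (mixVec (i : ℕ) q.1 q.2)|

/-- The quantity `δ₁`. -/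
def delta1 {N : ℕ} (μ : Measure (Fin N → ℝ)) (g f : (Fin N → ℝ) → ℝ) : ℝ :=
  (aConst μ g)⁻¹ * (∑ i, ∫ q, delta1aFn g f i q ∂(μ.prod μ)) +
  (aConst μ g)⁻¹ * (∑ i, ∫ q, delta1bFn g f i q ∂(μ.prod μ))

/-- The quantity `δ₂ = sqrt (Var (Σ_i Δ_{1,i}(Y)))`. -/
def delta2c {N : ℕ} (μ : Measure (Fin N → ℝ)) (g f : (Fin N → ℝ) → ℝ) : ℝ :=
  Real.sqrt (variance (fun y => ∑ i, Delta1 μ f i y) (tiltedMeasure μ g))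

/-- The quantity `δ₃ = sqrt (Var (Σ_i Δ_{2,i}(Y) − (1−b) f(Y)))`. -/
def delta3c {N : ℕ} (μ : Measure (Fin N → ℝ)) (g f : (Fin N → ℝ) → ℝ) : ℝ :=
  Real.sqrt (variance
    (fun y => ∑ i, Delta2 μ g f i y - (1 - bConst μ g f) * f y) (tiltedMeasure μ g))

/-- The quantity `I = (1/a) E[(f(X) − E f(X)) h(X) F(f(X))]`. -/
def termI {N : ℕ} (μ : Measure (Fin N → ℝ)) (g f : (Fin N → ℝ) → ℝ) (F : ℝ → ℝ) : ℝ :=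
  (aConst μ g)⁻¹ * ∫ x, (f x - ∫ x', f x' ∂μ) * Real.exp (g x) * F (f x) ∂μ

/-- The quantity
`I₁ = (1/(2a)) Σ_i E[h(X) F'(f(X)) (f(X) − f(X^(i))) (f(X^[i]) − f(X^[i−1]))]`. -/
def termI1 {N : ℕ} (μ : Measure (Fin N → ℝ)) (g f : (Fin N → ℝ) → ℝ) (F : ℝ → ℝ) : ℝ :=
  (2 * aConst μ g)⁻¹ * ∑ i, ∫ q, Real.exp (g q.1) * deriv F (f q.1) *
    (f q.1 - f (swapVec i q.1 q.2)) *
    (f (mixVec ((i : ℕ) + 1) q.1 q.2) - f (mixVec (i : ℕ) q.1 q.2)) ∂(μ.prod μ)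

/-- The quantity
`I₂ = (1/(2a)) Σ_i E[h(X) F(f(X)) (g(X) − g(X^(i))) (f(X^[i]) − f(X^[i−1]))]`. -/
def termI2 {N : ℕ} (μ : Measure (Fin N → ℝ)) (g f : (Fin N → ℝ) → ℝ) (F : ℝ → ℝ) : ℝ :=
  (2 * aConst μ g)⁻¹ * ∑ i, ∫ q, Real.exp (g q.1) * F (f q.1) *
    (g q.1 - g (swapVec i q.1 q.2)) *
    (f (mixVec ((i : ℕ) + 1) q.1 q.2) - f (mixVec (i : ℕ) q.1 q.2)) ∂(μ.prod μ)

namespace Lemma41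

variable {N : ℕ}

/-- the coordinate-pair swap map -/
def Tmap (i : Fin N) (q : (Fin N → ℝ) × (Fin N → ℝ)) : (Fin N → ℝ) × (Fin N → ℝ) :=
  (swapVec i q.1 q.2, swapVec i q.2 q.1)

lemma swapVec_apply (i : Fin N) (x x' : Fin N → ℝ) (j : Fin N) :
    swapVec i x x' j = if j = i then x' i else x j := by
  rw [swapVec, Function.update_apply]

lemma Tmap_involutive (i : Fin N) (q : (Fin N → ℝ) × (Fin N → ℝ)) :
    Tmap i (Tmap i q) = q := by
  unfold Tmap
  ext j <;> simp [swapVec_apply] <;> split <;> simp_all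

lemma swapVec_Tmap (i : Fin N) (q : (Fin N → ℝ) × (Fin N → ℝ)) :
    swapVec i (Tmap i q).1 (Tmap i q).2 = q.1 := by
  funext j
  simp [Tmap, swapVec_apply]
  split <;> simp_all

lemma mixVec_succ_Tmap (i : Fin N) (q : (Fin N → ℝ) × (Fin N → ℝ)) :
    mixVec ((i : ℕ) + 1) (Tmap i q).1 (Tmap i q).2 = mixVec (i : ℕ) q.1 q.2 := by
  funext j
  simp only [mixVec, Tmap, swapVec_apply]
  rcases lt_trichotomy (j : ℕ) (i : ℕ) with h | h | h
  · have hji : j ≠ i := by intro e; simp [e] at h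
    simp [h, Nat.lt_succ_of_lt h, hji, not_le.mpr h, if_neg (not_lt.mpr (le_of_lt h))]
  · have hji : j = i := Fin.ext h
    simp [hji]
  · have hji : j ≠ i := by intro e; simp [e] at h
    have h1 : ¬ ((j : ℕ) < (i : ℕ) + 1) := by omega
    have h2 : ¬ ((j : ℕ) < (i : ℕ)) := by omega
    simp [h1, h2, hji]

lemma mixVec_Tmap (i : Fin N) (q : (Fin N → ℝ) × (Fin N → ℝ)) :
    mixVec (i : ℕ) (Tmap i q).1 (Tmap i q).2 = mixVec ((i : ℕ) + 1) q.1 q.2 := by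
  funext j
  simp only [mixVec, Tmap, swapVec_apply]
  rcases lt_trichotomy (j : ℕ) (i : ℕ) with h | h | h
  · have hji : j ≠ i := by intro e; simp [e] at h
    simp [h, Nat.lt_succ_of_lt h, hji]
  · have hji : j = i := Fin.ext h
    simp [hji]
  · have hji : j ≠ i := by intro e; simp [e] at h
    have h1 : ¬ ((j : ℕ) < (i : ℕ) + 1) := by omega
    have h2 : ¬ ((j : ℕ) < (i : ℕ)) := by omega
    simp [h1, h2, hji]

lemma mixVec_zero (x x' : Fin N → ℝ) : mixVec 0 x x' = x' := by
  funext j; simp [mixVec]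

lemma mixVec_N (x x' : Fin N → ℝ) : mixVec N x x' = x := by
  funext j; simp [mixVec, j.isLt]

lemma Tmap_comm {i j : Fin N} (h : i ≠ j) (q : (Fin N → ℝ) × (Fin N → ℝ)) :
    Tmap i (Tmap j q) = Tmap j (Tmap i q) := by
  unfold Tmap
  have h' : j ≠ i := h.symm
  ext k <;> simp [swapVec_apply] <;> split <;> split <;> simp_all

lemma measurable_Tmap (i : Fin N) : Measurable (Tmap i) := by
  unfold Tmap swapVec
  apply Measurable.prod
  · exact measurable_update'.comp ((measurable_fst).prodMk ((measurable_pi_apply i).comp measurable_snd))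
  · exact measurable_update'.comp ((measurable_snd).prodMk ((measurable_pi_apply i).comp measurable_fst))

/-- `Tmap i` as a measurable equiv. -/
def TEquiv (i : Fin N) : ((Fin N → ℝ) × (Fin N → ℝ)) ≃ᵐ ((Fin N → ℝ) × (Fin N → ℝ)) where
  toFun := Tmap i
  invFun := Tmap i
  left_inv := Tmap_involutive i
  right_inv := Tmap_involutive i
  measurable_toFun := measurable_Tmap i
  measurable_invFun := measurable_Tmap i

lemma measurable_mixq (k : ℕ) :
    Measurable (fun q : (Fin N → ℝ) × (Fin N → ℝ) => mixVec k q.1 q.2) := by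
  apply measurable_pi_lambda
  intro j
  by_cases h : (j : ℕ) < k
  · simpa [mixVec, h, Function.comp_def] using (measurable_pi_apply j).comp measurable_fst
  · simpa [mixVec, h, Function.comp_def] using (measurable_pi_apply j).comp measurable_snd

lemma measurable_swapq (i : Fin N) :
    Measurable (fun q : (Fin N → ℝ) × (Fin N → ℝ) => swapVec i q.1 q.2) :=
  (measurable_Tmap i).fst

end Lemma41

namespace Lemma41
variable {N : ℕ}

lemma measurePreserving_Tmap (ν : Fin N → Measure ℝ) [∀ i, SigmaFinite (ν i)] (i : Fin N) :
    MeasurePreserving (Tmap i) ((Measure.pi ν).prod (Measure.pi ν))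
      ((Measure.pi ν).prod (Measure.pi ν)) := by
  classical
  set mm : Fin N ⊕ Fin N → Measure ℝ := Sum.elim ν ν with hmm
  set E := MeasurableEquiv.sumPiEquivProdPi (fun _ : Fin N ⊕ Fin N => ℝ) with hE
  haveI : ∀ j, SigmaFinite (mm j) := by
    rintro (a | a) <;> simp only [hmm, Sum.elim_inl, Sum.elim_inr] <;> infer_instance
  have h1 : MeasurePreserving E.symm
      ((Measure.pi ν).prod (Measure.pi ν)) (Measure.pi mm) :=
    MeasureTheory.measurePreserving_sumPiEquivProdPi_symm (μ := mm)
  set σ : Fin N ⊕ Fin N ≃ Fin N ⊕ Fin N := Equiv.swap (Sum.inl i) (Sum.inr i) with hσ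
  have hmmσ : (fun j => mm (σ j)) = mm := by
    funext j
    rcases j with a | a <;> by_cases h : a = i <;>
      simp [hσ, hmm, Equiv.swap_apply_def, h]
  have h2 : MeasurePreserving (MeasurableEquiv.piCongrLeft (fun _ : Fin N ⊕ Fin N => ℝ) σ)
      (Measure.pi mm) (Measure.pi mm) := by
    have := MeasureTheory.measurePreserving_piCongrLeft (μ := mm) σ
    rwa [hmmσ] at this
  have h3 : MeasurePreserving E (Measure.pi mm)
      ((Measure.pi ν).prod (Measure.pi ν)) := by
    have := h1.symm E.symm
    simpa using this
  have hcomp := (h3.comp h2).comp h1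
  have hfun : ((⇑E ∘ ⇑(MeasurableEquiv.piCongrLeft (fun _ : Fin N ⊕ Fin N => ℝ) σ)) ∘ ⇑E.symm)
      = Tmap i := by
    funext q
    have happ : ∀ (x : Fin N ⊕ Fin N → ℝ) (j : Fin N ⊕ Fin N),
        (MeasurableEquiv.piCongrLeft (fun _ : Fin N ⊕ Fin N => ℝ) σ) x j = x (σ j) := by
      intro x j
      have h0 := MeasurableEquiv.piCongrLeft_apply_apply (β := fun _ : Fin N ⊕ Fin N => ℝ) σ x (σ j)
      have hss : σ (σ j) = j := Equiv.swap_apply_self _ _ j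
      rwa [hss] at h0
    simp only [Function.comp_apply]
    have e1 : ∀ (y : Fin N ⊕ Fin N → ℝ) (j : Fin N),
        (E y).1 j = y (Sum.inl j) := fun _ _ => rfl
    have e2 : ∀ (y : Fin N ⊕ Fin N → ℝ) (j : Fin N),
        (E y).2 j = y (Sum.inr j) := fun _ _ => rfl
    have e3 : ∀ (j : Fin N), (E.symm q) (Sum.inl j) = q.1 j := fun _ => rfl
    have e4 : ∀ (j : Fin N), (E.symm q) (Sum.inr j) = q.2 j := fun _ => rfl
    have hcase : ∀ j : Fin N,
        (E ((MeasurableEquiv.piCongrLeft (fun _ : Fin N ⊕ Fin N => ℝ) σ) (E.symm q))).1 j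
          = (Tmap i q).1 j ∧
        (E ((MeasurableEquiv.piCongrLeft (fun _ : Fin N ⊕ Fin N => ℝ) σ) (E.symm q))).2 j
          = (Tmap i q).2 j := by
      intro j
      rw [e1, e2, happ, happ]
      rcases eq_or_ne j i with h | h
      · subst h
        have s1 : σ (Sum.inl j) = Sum.inr j := Equiv.swap_apply_left _ _
        have s2 : σ (Sum.inr j) = Sum.inl j := Equiv.swap_apply_right _ _
        rw [s1, s2, e4, e3]
        constructor <;> simp [Tmap, swapVec_apply]
      · have s1 : σ (Sum.inl j) = Sum.inl j := by
          rw [hσ, Equiv.swap_apply_of_ne_of_ne] <;> simp [h]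
        have s2 : σ (Sum.inr j) = Sum.inr j := by
          rw [hσ, Equiv.swap_apply_of_ne_of_ne] <;> simp [h]
        rw [s1, s2, e3, e4]
        constructor <;> simp [Tmap, swapVec_apply, h]
    ext j
    · exact (hcase j).1
    · exact (hcase j).2
  rwa [hfun] at hcomp

end Lemma41

namespace Lemma41

lemma exp_one_bound (t : ℝ) : |Real.exp t - 1| ≤ |t| * Real.exp |t| := by
  rcases le_or_gt 0 t with h | h
  · rw [abs_of_nonneg h, abs_of_nonneg (by nlinarith [Real.add_one_le_exp t] : (0:ℝ) ≤ Real.exp t - 1)]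
    have h1 : 1 - t ≤ Real.exp (-t) := by nlinarith [Real.add_one_le_exp (-t)]
    have h2 : Real.exp (-t) * Real.exp t = 1 := by
      rw [← Real.exp_add]; simp
    nlinarith [Real.exp_pos t]
  · rw [abs_of_neg h]
    have h1 : Real.exp t < 1 := Real.exp_lt_one_iff.mpr h
    have h2 : 1 + t ≤ Real.exp t := by nlinarith [Real.add_one_le_exp t]
    have h3 : (1:ℝ) ≤ Real.exp |t| := Real.one_le_exp (abs_nonneg t)
    rw [abs_of_nonpos (by linarith)]
    have h4 : (1:ℝ) ≤ Real.exp (-t) := Real.one_le_exp (by linarith)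
    nlinarith [mul_nonneg (by linarith : (0:ℝ) ≤ -t) (by linarith : (0:ℝ) ≤ Real.exp (-t) - 1)]

lemma exp_quad_bound (t : ℝ) : |Real.exp t - 1 - t| ≤ 2 * t ^ 2 * Real.exp |t| := by
  have hK : (1:ℝ) ≤ Real.exp |t| := Real.one_le_exp (abs_nonneg t)
  rcases le_or_gt |t| 1 with h | h
  · have hb := Real.exp_bound h (n := 2) (by norm_num)
    norm_num [Finset.sum_range_succ] at hb
    have he : Real.exp t - 1 - t = Real.exp t - (1 + t) := by ring
    rw [he]
    nlinarith [abs_nonneg (Real.exp t - (1 + t)), sq_nonneg t, sq_abs t,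
      abs_le.mp hb]
  · have h1 : Real.exp t ≤ Real.exp |t| := Real.exp_le_exp.mpr (le_abs_self t)
    have h2 : |t| + 1 ≤ Real.exp |t| := by nlinarith [Real.add_one_le_exp |t|]
    have h3 : 1 ≤ t ^ 2 := by nlinarith [sq_abs t]
    rw [abs_le]
    constructor <;>
      nlinarith [Real.exp_pos t, le_abs_self t, neg_abs_le t, sq_abs t, abs_nonneg t]

lemma exp_utilde_bound (t : ℝ) :
    |Real.exp (-t) - 1 + t * Real.exp (-t)| ≤ 3 * t ^ 2 * Real.exp |t| := by
  have h1 := exp_quad_bound (-t)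
  have h2 := exp_one_bound (-t)
  rw [abs_neg] at h1 h2
  have key : Real.exp (-t) - 1 + t * Real.exp (-t)
      = (Real.exp (-t) - 1 - (-t)) + t * (Real.exp (-t) - 1) := by ring
  rw [key]
  calc |(Real.exp (-t) - 1 - (-t)) + t * (Real.exp (-t) - 1)|
      ≤ |Real.exp (-t) - 1 - (-t)| + |t * (Real.exp (-t) - 1)| := abs_add_le _ _
    _ ≤ 2 * t ^ 2 * Real.exp |t| + |t| * (|t| * Real.exp |t|) := by
        rw [abs_mul]
        have h3 : (-t)^2 = t^2 := by ring
        rw [h3] at h1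
        exact add_le_add h1 (mul_le_mul_of_nonneg_left h2 (abs_nonneg t))
    _ ≤ 3 * t ^ 2 * Real.exp |t| := by nlinarith [sq_abs t, Real.exp_pos |t|]

lemma exp_cubic_bound (t : ℝ) :
    |2 - 2 * Real.exp (-t) - t - t * Real.exp (-t)| ≤ 8 * |t| ^ 3 * Real.exp |t| := by
  have hK : (1:ℝ) ≤ Real.exp |t| := Real.one_le_exp (abs_nonneg t)
  have ht0 : (0:ℝ) ≤ |t| := abs_nonneg t
  rcases le_or_gt |t| 1 with h | h
  · have hb := Real.exp_bound (x := -t) (by simpa using h) (n := 3) (by norm_num)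
    norm_num [Finset.sum_range_succ, abs_neg, Nat.factorial] at hb
    set r := Real.exp (-t) - (1 - t + t ^ 2 / 2) with hr
    have hrb : |r| ≤ |t| ^ 3 * (4 / 18) := by
      have h4 : Real.exp (-t) - (1 + -t + t ^ 2 / 2) = r := by rw [hr]; ring
      rw [h4] at hb
      nlinarith [hb]
    have hE : Real.exp (-t) = r + (1 - t + t ^ 2 / 2) := by rw [hr]; ring
    have key : 2 - 2 * Real.exp (-t) - t - t * Real.exp (-t)
        = -(2 * r) + -(t ^ 3 / 2) + -(t * r) := by rw [hE]; ring
    rw [key]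
    have tri : |(-(2 * r)) + -(t ^ 3 / 2) + -(t * r)|
        ≤ |(-(2 * r))| + |(-(t ^ 3 / 2))| + |(-(t * r))| :=
      (abs_add_le _ _).trans (add_le_add_left (abs_add_le _ _) _)
    have e1 : |(-(2 * r))| = 2 * |r| := by rw [abs_neg, abs_mul]; norm_num
    have e2 : |(-(t ^ 3 / 2))| = |t| ^ 3 / 2 := by
      rw [abs_neg, abs_div, abs_pow]; norm_num
    have e3 : |(-(t * r))| = |t| * |r| := by rw [abs_neg, abs_mul]
    rw [e1, e2, e3] at tri
    have hbound : 2 * |r| + |t| ^ 3 / 2 + |t| * |r| ≤ 8 * |t| ^ 3 * Real.exp |t| := by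
      have h6 : |t| * |r| ≤ |r| := by nlinarith [abs_nonneg r]
      have h7 : |t| ^ 3 / 2 ≤ |t| ^ 3 * Real.exp |t| := by
        nlinarith [pow_nonneg ht0 3]
      nlinarith [abs_nonneg r, pow_nonneg ht0 3]
    linarith
  · set E := Real.exp (-t) with hEdef
    have hE : E ≤ Real.exp |t| := Real.exp_le_exp.mpr (neg_le_abs t)
    have hEpos : 0 < E := Real.exp_pos _
    have key : 2 - 2 * E - t - t * E = 2 + -(2 * E) + -t + -(t * E) := by ring
    rw [key]
    have tri : |2 + -(2 * E) + -t + -(t * E)| ≤ |(2:ℝ)| + |(-(2 * E))| + |(-t)| + |(-(t * E))| :=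
      (abs_add_le _ _).trans (add_le_add_left ((abs_add_le _ _).trans
        (add_le_add_left (abs_add_le _ _) _)) _)
    have e1 : |(2:ℝ)| = 2 := by norm_num
    have e2 : |(-(2 * E))| = 2 * E := by rw [abs_neg, abs_mul, abs_of_pos hEpos]; norm_num
    have e3 : |(-t)| = |t| := abs_neg t
    have e4 : |(-(t * E))| = |t| * E := by rw [abs_neg, abs_mul, abs_of_pos hEpos]
    rw [e1, e2, e3, e4] at tri
    have hbound : 2 + 2 * E + |t| + |t| * E ≤ 8 * |t| ^ 3 * Real.exp |t| := by
      have hsq : 1 ≤ |t| ^ 2 := by nlinarith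
      have ha3 : |t| ≤ |t| ^ 3 := by nlinarith [mul_le_mul_of_nonneg_left hsq ht0]
      have h1a3 : 1 ≤ |t| ^ 3 := by nlinarith
      have hKpos : (0:ℝ) < Real.exp |t| := Real.exp_pos _
      have b1 : 2 ≤ 2 * (|t| ^ 3 * Real.exp |t|) := by nlinarith
      have b2 : 2 * E ≤ 2 * (|t| ^ 3 * Real.exp |t|) := by nlinarith
      have b3 : |t| ≤ |t| ^ 3 * Real.exp |t| := by nlinarith
      have b4 : |t| * E ≤ |t| ^ 3 * Real.exp |t| := by nlinarith
      linarith
    linarith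

lemma lip_bound {F : ℝ → ℝ} (hF : Differentiable ℝ F)
    (hF' : ∀ x, |deriv F x| ≤ 2) (a b : ℝ) : |F b - F a| ≤ 2 * |b - a| := by
  have := Convex.norm_image_sub_le_of_norm_deriv_le (f := F) (s := Set.univ)
    (fun x _ => hF.differentiableAt) (fun x _ => by simpa using hF' x)
    convex_univ (Set.mem_univ a) (Set.mem_univ b)
  simpa [Real.norm_eq_abs] using this

lemma taylor_bound {F : ℝ → ℝ} (hF : Differentiable ℝ F) (hF' : Differentiable ℝ (deriv F))
    (hF'' : ∀ x, |deriv (deriv F) x| ≤ 2) (a b : ℝ) :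
    |F b - F a - deriv F a * (b - a)| ≤ 2 * (b - a) ^ 2 := by
  set G : ℝ → ℝ := fun x => F x - deriv F a * x with hG
  have hGdiff : ∀ x, DifferentiableAt ℝ G x := fun x =>
    (hF x).sub ((differentiableAt_id.const_mul _))
  have hGderiv : ∀ x, deriv G x = deriv F x - deriv F a := by
    intro x
    have h2 : HasDerivAt (fun y => deriv F a * y) (deriv F a) x := by
      simpa using (hasDerivAt_id x).const_mul (deriv F a)
    have hd : HasDerivAt G (deriv F x - deriv F a) x := ((hF x).hasDerivAt).sub h2
    exact hd.deriv
  have hlipF' : ∀ x y, |deriv F x - deriv F y| ≤ 2 * |x - y| := fun x y =>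
    lip_bound hF' hF'' y x
  have hmem : ∀ x ∈ Set.uIcc a b, |x - a| ≤ |b - a| := by
    intro x hx
    rw [Set.mem_uIcc] at hx
    rw [abs_le]
    rcases hx with ⟨h1, h2⟩ | ⟨h1, h2⟩ <;>
      constructor <;> nlinarith [le_abs_self (b - a), neg_abs_le (b - a)]
  have hbd : ∀ x ∈ Set.uIcc a b, ‖deriv G x‖ ≤ 2 * |b - a| := by
    intro x hx
    rw [Real.norm_eq_abs, hGderiv x]
    calc |deriv F x - deriv F a| ≤ 2 * |x - a| := hlipF' x a
      _ ≤ 2 * |b - a| := by nlinarith [hmem x hx]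
  have := Convex.norm_image_sub_le_of_norm_deriv_le (f := G) (s := Set.uIcc a b)
    (fun x _ => hGdiff x) hbd (convex_uIcc a b) (Set.left_mem_uIcc) (Set.right_mem_uIcc)
  have heq : G b - G a = F b - F a - deriv F a * (b - a) := by rw [hG]; ring
  rw [Real.norm_eq_abs, Real.norm_eq_abs, heq] at this
  calc |F b - F a - deriv F a * (b - a)| ≤ 2 * |b - a| * |b - a| := this
    _ = 2 * (b - a) ^ 2 := by nlinarith [sq_abs (b - a), abs_nonneg (b - a)]
end Lemma41

namespace Lemma41

lemma integral_sum_symmetrize {α : Type*} {ι : Type*} [DecidableEq ι] [MeasurableSpace α]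
    {ρ : Measure α} (T : ι → α ≃ᵐ α) (hT : ∀ i, MeasurePreserving (T i) ρ ρ)
    (hcomm : ∀ i j, i ≠ j → ∀ x, T i (T j x) = T j (T i x))
    (S : Finset ι) (w : ι → α → ℝ)
    (hsym : ∀ i ∈ S, Integrable (fun x => (w i x + w i (T i x)) / 2) ρ)
    (hint : Integrable (fun x => ∑ i ∈ S, w i x) ρ) :
    ∫ x, (∑ i ∈ S, w i x) ∂ρ = ∑ i ∈ S, ∫ x, (w i x + w i (T i x)) / 2 ∂ρ := by
  classical
  induction S using Finset.induction_on generalizing w with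
  | empty => simp
  | @insert a S' ha ih =>
    have hWint : Integrable (fun x => ∑ i ∈ insert a S', w i x) ρ := hint
    have hWTa : Integrable (fun x => ∑ i ∈ insert a S', w i (T a x)) ρ := by
      have := ((hT a).integrable_comp_emb (T a).measurableEmbedding).mpr hWint
      simpa [Function.comp_def] using this
    have hInt_eq : ∫ x, (∑ i ∈ insert a S', w i (T a x)) ∂ρ
        = ∫ x, (∑ i ∈ insert a S', w i x) ∂ρ :=
      (hT a).integral_comp (T a).measurableEmbedding (fun x => ∑ i ∈ insert a S', w i x)
    set w' : ι → α → ℝ := fun i x => (w i x + w i (T a x)) / 2 with hw'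
    have hsplit : ∀ x, ∑ i ∈ S', w' i x
        = ((∑ i ∈ S', w i x) + (∑ i ∈ S', w i (T a x))) / 2 := by
      intro x
      simp only [hw']
      rw [← Finset.sum_div, Finset.sum_add_distrib]
    have hsyma := hsym a (Finset.mem_insert_self a S')
    have heqS' : (fun x => ∑ i ∈ S', w' i x)
        = fun x => ((∑ i ∈ insert a S', w i x) + (∑ i ∈ insert a S', w i (T a x))) / 2
            - (w a x + w a (T a x)) / 2 := by
      funext x
      rw [hsplit, Finset.sum_insert ha, Finset.sum_insert ha]
      ring
    have hw'sum : Integrable (fun x => ∑ i ∈ S', w' i x) ρ := by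
      rw [heqS']
      exact ((hWint.add hWTa).div_const 2).sub hsyma
    have hsymTa : ∀ i ∈ S', (fun x => (w' i x + w' i (T i x)) / 2)
        = fun x => ((w i x + w i (T i x)) / 2 + (w i (T a x) + w i (T i (T a x))) / 2) / 2 := by
      intro i hi
      have hia : i ≠ a := by rintro rfl; exact ha hi
      funext x
      simp only [hw']
      rw [hcomm a i hia.symm x]
      ring
    have hsym' : ∀ i ∈ S', Integrable (fun x => (w' i x + w' i (T i x)) / 2) ρ := by
      intro i hi
      rw [hsymTa i hi]
      have g1 := hsym i (Finset.mem_insert_of_mem hi)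
      have g2 : Integrable (fun x => (w i (T a x) + w i (T i (T a x))) / 2) ρ := by
        have := ((hT a).integrable_comp_emb (T a).measurableEmbedding).mpr g1
        simpa [Function.comp_def] using this
      exact (g1.add g2).div_const 2
    have hIH := ih w' hsym' hw'sum
    have hterm : ∀ i ∈ S', ∫ x, (w' i x + w' i (T i x)) / 2 ∂ρ
        = ∫ x, (w i x + w i (T i x)) / 2 ∂ρ := by
      intro i hi
      rw [hsymTa i hi]
      have g1 := hsym i (Finset.mem_insert_of_mem hi)
      have g2 : Integrable (fun x => (w i (T a x) + w i (T i (T a x))) / 2) ρ := by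
        have := ((hT a).integrable_comp_emb (T a).measurableEmbedding).mpr g1
        simpa [Function.comp_def] using this
      have g3' : ∫ x, (w i (T a x) + w i (T i (T a x))) / 2 / 2 ∂ρ
          = ∫ x, (w i x + w i (T i x)) / 2 / 2 ∂ρ :=
        (hT a).integral_comp (T a).measurableEmbedding (fun x => (w i x + w i (T i x)) / 2 / 2)
      rw [show (fun x => ((w i x + w i (T i x)) / 2 + (w i (T a x) + w i (T i (T a x))) / 2) / 2)
          = fun x => ((w i x + w i (T i x)) / 2 / 2 + (w i (T a x) + w i (T i (T a x))) / 2 / 2)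
          from funext fun x => by ring]
      rw [integral_add (g1.div_const 2) (g2.div_const 2), g3']
      simp only [integral_div]
      ring
    have hmain : ∫ x, (∑ i ∈ insert a S', w i x) ∂ρ
        = ∫ x, ((w a x + w a (T a x)) / 2 + ∑ i ∈ S', w' i x) ∂ρ := by
      have e1 : (fun x => ((w a x + w a (T a x)) / 2 + ∑ i ∈ S', w' i x))
          = fun x => ((∑ i ∈ insert a S', w i x) / 2 + (∑ i ∈ insert a S', w i (T a x)) / 2) := by
        funext x
        rw [hsplit, Finset.sum_insert ha, Finset.sum_insert ha]
        ring
      rw [e1, integral_add (hWint.div_const 2) (hWTa.div_const 2), integral_div, integral_div,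
        hInt_eq]
      ring
    rw [hmain, integral_add hsyma hw'sum, hIH, Finset.sum_insert ha,
      Finset.sum_congr rfl hterm]

end Lemma41

namespace Lemma41
lemma abs_integral_le {α : Type*} [MeasurableSpace α] (ρ : MeasureTheory.Measure α) (f : α → ℝ) :
    |∫ x, f x ∂ρ| ≤ ∫ x, |f x| ∂ρ := by
  simpa [Real.norm_eq_abs] using MeasureTheory.norm_integral_le_integral_norm (μ := ρ) f
end Lemma41

namespace Lemma41

variable {N : ℕ}

def Dq (f : (Fin N → ℝ) → ℝ) (i : Fin N) (q : (Fin N → ℝ) × (Fin N → ℝ)) : ℝ :=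
  f (mixVec ((i : ℕ) + 1) q.1 q.2) - f (mixVec (i : ℕ) q.1 q.2)

def Aq (g f : (Fin N → ℝ) → ℝ) (F : ℝ → ℝ) (i : Fin N)
    (q : (Fin N → ℝ) × (Fin N → ℝ)) : ℝ :=
  Real.exp (g q.1) * deriv F (f q.1) * (f q.1 - f (swapVec i q.1 q.2)) * Dq f i q

def Bq (g f : (Fin N → ℝ) → ℝ) (F : ℝ → ℝ) (i : Fin N)
    (q : (Fin N → ℝ) × (Fin N → ℝ)) : ℝ :=
  Real.exp (g q.1) * F (f q.1) * (g q.1 - g (swapVec i q.1 q.2)) * Dq f i q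

def Raq (g f : (Fin N → ℝ) → ℝ) (F : ℝ → ℝ) (i : Fin N)
    (q : (Fin N → ℝ) × (Fin N → ℝ)) : ℝ :=
  (1/2) * Dq f i q * Real.exp (g q.1) *
    (F (f q.1) - F (f (swapVec i q.1 q.2))
      - deriv F (f q.1) * (f q.1 - f (swapVec i q.1 q.2)))

def wq (g f : (Fin N → ℝ) → ℝ) (F : ℝ → ℝ) (i : Fin N)
    (q : (Fin N → ℝ) × (Fin N → ℝ)) : ℝ :=
  Dq f i q * (Real.exp (g q.1) * F (f q.1))
    - (1/2) * Aq g f F i q - (1/2) * Bq g f F i q - Raq g f F i q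

lemma Dq_Tmap (f : (Fin N → ℝ) → ℝ) (i : Fin N) (q : (Fin N → ℝ) × (Fin N → ℝ)) :
    Dq f i (Tmap i q) = - Dq f i q := by
  unfold Dq
  rw [mixVec_succ_Tmap, mixVec_Tmap]
  ring

lemma wq_add_Tmap (g f : (Fin N → ℝ) → ℝ) (F : ℝ → ℝ) (i : Fin N)
    (q : (Fin N → ℝ) × (Fin N → ℝ)) :
    (wq g f F i q + wq g f F i (Tmap i q)) / 2
      = (1/4) * Dq f i q * Real.exp (g q.1) *
        ((2 - 2 * Real.exp (-(g q.1 - g (swapVec i q.1 q.2)))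
            - (g q.1 - g (swapVec i q.1 q.2))
            - (g q.1 - g (swapVec i q.1 q.2)) * Real.exp (-(g q.1 - g (swapVec i q.1 q.2))))
          * F (f q.1)
        - (Real.exp (-(g q.1 - g (swapVec i q.1 q.2))) - 1
            + (g q.1 - g (swapVec i q.1 q.2)) * Real.exp (-(g q.1 - g (swapVec i q.1 q.2))))
          * (F (f (swapVec i q.1 q.2)) - F (f q.1))) := by
  have hD := Dq_Tmap f i q
  have h2 := swapVec_Tmap i q
  have hexp' : Real.exp (g (swapVec i q.1 q.2))
      = Real.exp (g q.1) * Real.exp (-(g q.1 - g (swapVec i q.1 q.2))) := by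
    rw [← Real.exp_add]; congr 1; ring
  unfold wq Aq Bq Raq
  rw [hD, h2]
  rw [show (Tmap i q).1 = swapVec i q.1 q.2 from rfl]
  rw [hexp']
  ring

lemma Ra_bound {g f : (Fin N → ℝ) → ℝ} {F : ℝ → ℝ}
    (hFd : Differentiable ℝ F) (hF'd : Differentiable ℝ (deriv F))
    (hF''b : ∀ x, |deriv (deriv F) x| ≤ 2) (i : Fin N)
    (q : (Fin N → ℝ) × (Fin N → ℝ)) :
    |Raq g f F i q| ≤ delta1aFn g f i q := by
  have ht := taylor_bound hFd hF'd hF''b (f q.1) (f (swapVec i q.1 q.2))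
  have hneg : F (f q.1) - F (f (swapVec i q.1 q.2))
      - deriv F (f q.1) * (f q.1 - f (swapVec i q.1 q.2))
      = -(F (f (swapVec i q.1 q.2)) - F (f q.1)
        - deriv F (f q.1) * (f (swapVec i q.1 q.2) - f q.1)) := by ring
  have hsq : (f (swapVec i q.1 q.2) - f q.1) ^ 2 = (f q.1 - f (swapVec i q.1 q.2)) ^ 2 := by ring
  have hbr : |F (f q.1) - F (f (swapVec i q.1 q.2))
      - deriv F (f q.1) * (f q.1 - f (swapVec i q.1 q.2))|
      ≤ 2 * (f q.1 - f (swapVec i q.1 q.2)) ^ 2 := by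
    rw [hneg, abs_neg]
    rw [hsq] at ht
    exact ht
  have he : (0:ℝ) < Real.exp (g q.1) := Real.exp_pos _
  have hexpand : |Raq g f F i q| = (1/2) * |Dq f i q| * Real.exp (g q.1) *
      |F (f q.1) - F (f (swapVec i q.1 q.2))
        - deriv F (f q.1) * (f q.1 - f (swapVec i q.1 q.2))| := by
    unfold Raq
    rw [abs_mul, abs_mul, abs_mul, abs_of_pos he]
    norm_num
  rw [hexpand]
  have hδ : delta1aFn g f i q = Real.exp (g q.1) *
      (f q.1 - f (swapVec i q.1 q.2)) ^ 2 * |Dq f i q| := rfl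
  rw [hδ]
  nlinarith [abs_nonneg (Dq f i q), sq_nonneg (f q.1 - f (swapVec i q.1 q.2)),
    mul_le_mul_of_nonneg_left hbr (mul_nonneg (by positivity)
      (abs_nonneg (Dq f i q)) : (0:ℝ) ≤ (1/2) * |Dq f i q|)]

lemma sym_bound_abs {F : ℝ → ℝ} (hFd : Differentiable ℝ F)
    (hFb : ∀ x, |F x| ≤ 2) (hF'b : ∀ x, |deriv F x| ≤ 2)
    (d e t a1 a2 : ℝ) (he : 0 < e) :
    |(1/4) * d * e *
        ((2 - 2 * Real.exp (-t) - t - t * Real.exp (-t)) * F a1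
          - (Real.exp (-t) - 1 + t * Real.exp (-t)) * (F a2 - F a1))|
      ≤ 4 * (e * Real.exp |t| * t ^ 2 * (|t| + |a1 - a2|) * |d|) := by
  have hw1 := exp_cubic_bound t
  have hu := exp_utilde_bound t
  have hFa := hFb a1
  have hdF : |F a2 - F a1| ≤ 2 * |a1 - a2| := by
    have h := lip_bound hFd hF'b a1 a2
    rwa [abs_sub_comm a2 a1] at h
  have he' : (0:ℝ) < Real.exp |t| := Real.exp_pos _
  have hX : |(2 - 2 * Real.exp (-t) - t - t * Real.exp (-t)) * F a1
      - (Real.exp (-t) - 1 + t * Real.exp (-t)) * (F a2 - F a1)|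
      ≤ 16 * |t| ^ 3 * Real.exp |t| + 6 * t ^ 2 * Real.exp |t| * |a1 - a2| := by
    have tri : |(2 - 2 * Real.exp (-t) - t - t * Real.exp (-t)) * F a1
        - (Real.exp (-t) - 1 + t * Real.exp (-t)) * (F a2 - F a1)|
        ≤ |(2 - 2 * Real.exp (-t) - t - t * Real.exp (-t)) * F a1|
          + |(Real.exp (-t) - 1 + t * Real.exp (-t)) * (F a2 - F a1)| := by
      rw [sub_eq_add_neg]
      refine (abs_add_le _ _).trans ?_
      rw [abs_neg]
    refine tri.trans ?_
    rw [abs_mul, abs_mul]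
    have b1 : |2 - 2 * Real.exp (-t) - t - t * Real.exp (-t)| * |F a1|
        ≤ (8 * |t| ^ 3 * Real.exp |t|) * 2 :=
      mul_le_mul hw1 hFa (abs_nonneg _) (by positivity)
    have b2 : |Real.exp (-t) - 1 + t * Real.exp (-t)| * |F a2 - F a1|
        ≤ (3 * t ^ 2 * Real.exp |t|) * (2 * |a1 - a2|) :=
      mul_le_mul hu hdF (abs_nonneg _) (by positivity)
    nlinarith [b1, b2]
  have habs : |(1/4) * d * e *
      ((2 - 2 * Real.exp (-t) - t - t * Real.exp (-t)) * F a1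
        - (Real.exp (-t) - 1 + t * Real.exp (-t)) * (F a2 - F a1))|
      = (1/4) * |d| * e *
        |(2 - 2 * Real.exp (-t) - t - t * Real.exp (-t)) * F a1
          - (Real.exp (-t) - 1 + t * Real.exp (-t)) * (F a2 - F a1)| := by
    rw [abs_mul, abs_mul, abs_mul, abs_of_pos he]
    norm_num
  rw [habs]
  have hstep := mul_le_mul_of_nonneg_left hX
    (by positivity : (0:ℝ) ≤ (1/4) * |d| * e)
  refine hstep.trans ?_
  have ht3 : |t| ^ 3 = t ^ 2 * |t| := by rw [← sq_abs]; ring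
  rw [ht3]
  have hkey : (0:ℝ) ≤ e * Real.exp |t| * t ^ 2 * |a1 - a2| * |d| :=
    mul_nonneg (mul_nonneg (mul_nonneg (mul_nonneg he.le he'.le)
      (sq_nonneg t)) (abs_nonneg _)) (abs_nonneg d)
  nlinarith [hkey]

lemma sym_bound {g f : (Fin N → ℝ) → ℝ} {F : ℝ → ℝ}
    (hFd : Differentiable ℝ F)
    (hFb : ∀ x, |F x| ≤ 2) (hF'b : ∀ x, |deriv F x| ≤ 2) (i : Fin N)
    (q : (Fin N → ℝ) × (Fin N → ℝ)) :
    |(wq g f F i q + wq g f F i (Tmap i q)) / 2| ≤ 4 * delta1bFn g f i q := by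
  rw [wq_add_Tmap]
  have hδ : delta1bFn g f i q = Real.exp (g q.1)
      * Real.exp |g q.1 - g (swapVec i q.1 q.2)| * (g q.1 - g (swapVec i q.1 q.2)) ^ 2 *
      (|g q.1 - g (swapVec i q.1 q.2)| + |f q.1 - f (swapVec i q.1 q.2)|) * |Dq f i q| := rfl
  rw [hδ]
  exact sym_bound_abs hFd hFb hF'b (Dq f i q) (Real.exp (g q.1))
    (g q.1 - g (swapVec i q.1 q.2)) (f q.1) (f (swapVec i q.1 q.2)) (Real.exp_pos _)

end Lemma41

namespace Lemma41
variable {N : ℕ}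

lemma sum_Dq (f : (Fin N → ℝ) → ℝ) (q : (Fin N → ℝ) × (Fin N → ℝ)) :
    ∑ i : Fin N, Dq f i q = f q.1 - f q.2 := by
  have h0 : ∑ i : Fin N, Dq f i q
      = ∑ i : Fin N, (fun k => f (mixVec (k+1) q.1 q.2) - f (mixVec k q.1 q.2)) (i : ℕ) :=
    Finset.sum_congr rfl (fun i _ => rfl)
  rw [h0, Fin.sum_univ_eq_sum_range (fun k => f (mixVec (k+1) q.1 q.2) - f (mixVec k q.1 q.2)) N,
    Finset.sum_range_sub (fun k => f (mixVec k q.1 q.2)), mixVec_N, mixVec_zero]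

end Lemma41


-- main theorem (statement copied; uses defs from proof.lean context)


open Lemma41 in
/-- **Lemma 4.1**: `|I − I₁ − I₂| ≤ C δ₁` for an absolute constant `C`. -/
theorem I_decomposition_bound :
    ∃ C : ℝ, 0 < C ∧
    ∀ (N : ℕ) (ν : Fin N → Measure ℝ),
      (∀ i, IsProbabilityMeasure (ν i)) →
      ∀ g f : (Fin N → ℝ) → ℝ,
      Measurable g → Measurable f →
      -- `a = E h(X) < ∞` and `E f(X)` finite
      Integrable (fun x => Real.exp (g x)) (Measure.pi ν) →
      Integrable f (Measure.pi ν) →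
      -- `E f(Y) = 0`
      Integrable f (tiltedMeasure (Measure.pi ν) g) →
      (∫ y, f y ∂(tiltedMeasure (Measure.pi ν) g)) = 0 →
      -- finiteness of `δ₁`
      (∀ i, Integrable (delta1aFn g f i) ((Measure.pi ν).prod (Measure.pi ν))) →
      (∀ i, Integrable (delta1bFn g f i) ((Measure.pi ν).prod (Measure.pi ν))) →
      -- the function `F`
      ∀ F : ℝ → ℝ,
      Differentiable ℝ F → Differentiable ℝ (deriv F) →
      (∀ x, |F x| ≤ 2) → (∀ x, |deriv F x| ≤ 2) → (∀ x, |deriv (deriv F) x| ≤ 2) →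
      -- finiteness of `I`, `I₁`, `I₂`
      Integrable (fun x => (f x - ∫ x', f x' ∂(Measure.pi ν)) * Real.exp (g x) * F (f x))
        (Measure.pi ν) →
      (∀ i : Fin N, Integrable (fun q : (Fin N → ℝ) × (Fin N → ℝ) =>
        Real.exp (g q.1) * deriv F (f q.1) * (f q.1 - f (swapVec i q.1 q.2)) *
          (f (mixVec ((i : ℕ) + 1) q.1 q.2) - f (mixVec (i : ℕ) q.1 q.2)))
        ((Measure.pi ν).prod (Measure.pi ν))) →
      (∀ i : Fin N, Integrable (fun q : (Fin N → ℝ) × (Fin N → ℝ) =>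
        Real.exp (g q.1) * F (f q.1) * (g q.1 - g (swapVec i q.1 q.2)) *
          (f (mixVec ((i : ℕ) + 1) q.1 q.2) - f (mixVec (i : ℕ) q.1 q.2)))
        ((Measure.pi ν).prod (Measure.pi ν))) →
      -- conclusion
      |termI (Measure.pi ν) g f F - termI1 (Measure.pi ν) g f F -
          termI2 (Measure.pi ν) g f F| ≤
        C * delta1 (Measure.pi ν) g f := by
  classical
  refine ⟨8, by norm_num, ?_⟩
  intro N ν hprob g f hgm hfm hexp hfint _hftilt _hfY0 hδa hδb F hFd hF'd hFb hF'b hF''b hI hI1 hI2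
  haveI : ∀ i, IsProbabilityMeasure (ν i) := hprob
  haveI hsf : ∀ i, SigmaFinite (ν i) := fun i => inferInstance
  set μ : Measure (Fin N → ℝ) := Measure.pi ν with hμdef
  haveI : IsProbabilityMeasure μ := by rw [hμdef]; infer_instance
  set a := aConst μ g with hadef
  -- positivity of a
  have ha : 0 < a := by
    rw [hadef, aConst]
    rw [integral_pos_iff_support_of_nonneg (fun x => (Real.exp_pos (g x)).le) hexp]
    have hs : (Function.support fun x => Real.exp (g x)) = Set.univ :=
      Set.eq_univ_of_forall (fun x => (Real.exp_pos (g x)).ne')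
    rw [hs]
    simp
  -- measurability facts
  have hFc : Continuous F := hFd.continuous
  have hF'c : Continuous (deriv F) := hF'd.continuous
  have m1 : Measurable fun q : (Fin N → ℝ) × (Fin N → ℝ) => Real.exp (g q.1) :=
    Real.measurable_exp.comp (hgm.comp measurable_fst)
  have m2 : Measurable fun q : (Fin N → ℝ) × (Fin N → ℝ) => F (f q.1) :=
    hFc.measurable.comp (hfm.comp measurable_fst)
  have m3 : Measurable fun q : (Fin N → ℝ) × (Fin N → ℝ) => deriv F (f q.1) :=
    hF'c.measurable.comp (hfm.comp measurable_fst)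
  have m4 : ∀ i : Fin N, Measurable fun q : (Fin N → ℝ) × (Fin N → ℝ) =>
      f (swapVec i q.1 q.2) := fun i => hfm.comp (measurable_swapq i)
  have m5 : ∀ i : Fin N, Measurable fun q : (Fin N → ℝ) × (Fin N → ℝ) =>
      g (swapVec i q.1 q.2) := fun i => hgm.comp (measurable_swapq i)
  have m6 : ∀ i : Fin N, Measurable fun q : (Fin N → ℝ) × (Fin N → ℝ) =>
      F (f (swapVec i q.1 q.2)) := fun i => hFc.measurable.comp (m4 i)
  have m7 : ∀ i : Fin N, Measurable (Dq f i) := fun i =>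
    (hfm.comp (measurable_mixq _)).sub (hfm.comp (measurable_mixq _))
  have m8 : Measurable fun q : (Fin N → ℝ) × (Fin N → ℝ) => f q.1 :=
    hfm.comp measurable_fst
  have m9 : Measurable fun q : (Fin N → ℝ) × (Fin N → ℝ) => g q.1 :=
    hgm.comp measurable_fst
  have m_A : ∀ i, Measurable (Aq g f F i) := fun i => by
    unfold Aq
    exact ((m1.mul m3).mul (m8.sub (m4 i))).mul (m7 i)
  have m_B : ∀ i, Measurable (Bq g f F i) := fun i => by
    unfold Bq
    exact ((m1.mul m2).mul (m9.sub (m5 i))).mul (m7 i)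
  have m_Ra : ∀ i, Measurable (Raq g f F i) := fun i => by
    unfold Raq
    exact (((measurable_const.mul (m7 i)).mul m1).mul
      ((m2.sub (m6 i)).sub (m3.mul (m8.sub (m4 i)))))
  have m_w : ∀ i, Measurable (wq g f F i) := fun i => by
    unfold wq
    exact ((((m7 i).mul (m1.mul m2)).sub ((m_A i).const_mul (1/2))).sub
      ((m_B i).const_mul (1/2))).sub (m_Ra i)
  -- integrabilities
  have int_A : ∀ i, Integrable (Aq g f F i) (μ.prod μ) := fun i => hI1 i
  have int_B : ∀ i, Integrable (Bq g f F i) (μ.prod μ) := fun i => hI2 i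
  have int_Ra : ∀ i, Integrable (Raq g f F i) (μ.prod μ) := fun i =>
    (hδa i).mono' (m_Ra i).aestronglyMeasurable (Filter.Eventually.of_forall fun q => by
      rw [Real.norm_eq_abs]; exact Ra_bound hFd hF'd hF''b i q)
  have int_sym : ∀ i, Integrable
      (fun q => (wq g f F i q + wq g f F i (Tmap i q)) / 2) (μ.prod μ) := fun i =>
    ((hδb i).const_mul 4).mono'
      (((m_w i).add ((m_w i).comp (measurable_Tmap i))).div_const 2).aestronglyMeasurable
      (Filter.Eventually.of_forall fun q => by
        rw [Real.norm_eq_abs]; exact sym_bound hFd hFb hF'b i q)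
  have m_phiμ : Measurable fun x => Real.exp (g x) * F (f x) :=
    (Real.measurable_exp.comp hgm).mul (hFc.measurable.comp hfm)
  have int_phiμ : Integrable (fun x => Real.exp (g x) * F (f x)) μ :=
    (hexp.const_mul 2).mono' m_phiμ.aestronglyMeasurable
      (Filter.Eventually.of_forall fun x => by
        rw [Real.norm_eq_abs, abs_mul, abs_of_pos (Real.exp_pos _)]
        nlinarith [Real.exp_pos (g x), abs_nonneg (F (f x)), hFb (f x)])
  have int_phifμ : Integrable (fun x => Real.exp (g x) * F (f x) * f x) μ := by
    have he : (fun x => Real.exp (g x) * F (f x) * f x)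
        = fun x => (f x - ∫ x', f x' ∂μ) * Real.exp (g x) * F (f x)
          + (∫ x', f x' ∂μ) * (Real.exp (g x) * F (f x)) := funext fun x => by ring
    rw [he]
    exact hI.add (int_phiμ.const_mul _)
  have hmap : Measure.map Prod.fst (μ.prod μ) = μ := by
    rw [Measure.map_fst_prod]; simp
  have int_phif1 : Integrable
      (fun q : (Fin N → ℝ) × (Fin N → ℝ) => Real.exp (g q.1) * F (f q.1) * f q.1)
      (μ.prod μ) := by
    have hsm : AEStronglyMeasurable (fun x => Real.exp (g x) * F (f x) * f x)
        (Measure.map Prod.fst (μ.prod μ)) := (m_phiμ.mul hfm).aestronglyMeasurable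
    have h := integrable_map_measure hsm measurable_fst.aemeasurable
    rw [hmap] at h
    exact h.mp int_phifμ
  have int_phif2 : Integrable
      (fun q : (Fin N → ℝ) × (Fin N → ℝ) => Real.exp (g q.1) * F (f q.1) * f q.2)
      (μ.prod μ) := int_phiμ.mul_prod hfint
  have efst : ∫ q, Real.exp (g q.1) * F (f q.1) * f q.1 ∂(μ.prod μ)
      = ∫ x, Real.exp (g x) * F (f x) * f x ∂μ := by
    conv_rhs => rw [← hmap]
    rw [integral_map (f := fun x => Real.exp (g x) * F (f x) * f x) measurable_fst.aemeasurable
      (m_phiμ.mul hfm).aestronglyMeasurable]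
  have emul : ∫ q, Real.exp (g q.1) * F (f q.1) * f q.2 ∂(μ.prod μ)
      = (∫ x, Real.exp (g x) * F (f x) ∂μ) * ∫ x, f x ∂μ :=
    integral_prod_mul (fun x => Real.exp (g x) * F (f x)) f
  have hJ : ∫ x, (f x - ∫ x', f x' ∂μ) * Real.exp (g x) * F (f x) ∂μ
      = ∫ q, (Real.exp (g q.1) * F (f q.1) * f q.1
          - Real.exp (g q.1) * F (f q.1) * f q.2) ∂(μ.prod μ) := by
    rw [integral_sub int_phif1 int_phif2, efst, emul]
    rw [show (fun x => (f x - ∫ x', f x' ∂μ) * Real.exp (g x) * F (f x))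
        = fun x => Real.exp (g x) * F (f x) * f x
          - (∫ x', f x' ∂μ) * (Real.exp (g x) * F (f x)) from funext fun x => by ring]
    rw [integral_sub int_phifμ (int_phiμ.const_mul _), integral_const_mul]
    ring
  -- pointwise telescoping identity
  have hptw : ∀ q : (Fin N → ℝ) × (Fin N → ℝ),
      Real.exp (g q.1) * F (f q.1) * f q.1 - Real.exp (g q.1) * F (f q.1) * f q.2
      = (∑ i, ((1/2) * Aq g f F i q + (1/2) * Bq g f F i q + Raq g f F i q))
        + ∑ i, wq g f F i q := by
    intro q
    have h1 : ∀ i ∈ Finset.univ, ((1/2) * Aq g f F i q + (1/2) * Bq g f F i q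
        + Raq g f F i q) + wq g f F i q
        = Dq f i q * (Real.exp (g q.1) * F (f q.1)) := fun i _ => by unfold wq; ring
    rw [← Finset.sum_add_distrib, Finset.sum_congr rfl h1, ← Finset.sum_mul, sum_Dq]
    ring
  have int_main_i : ∀ i : Fin N, Integrable
      (fun q => (1/2) * Aq g f F i q + (1/2) * Bq g f F i q + Raq g f F i q) (μ.prod μ) :=
    fun i => (((int_A i).const_mul (1/2)).add ((int_B i).const_mul (1/2))).add (int_Ra i)
  have int_main : Integrable
      (fun q => ∑ i, ((1/2) * Aq g f F i q + (1/2) * Bq g f F i q + Raq g f F i q))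
      (μ.prod μ) := integrable_finset_sum _ fun i _ => int_main_i i
  have int_wsum : Integrable (fun q => ∑ i, wq g f F i q) (μ.prod μ) := by
    have he : (fun q => ∑ i, wq g f F i q)
        = fun q => (Real.exp (g q.1) * F (f q.1) * f q.1
            - Real.exp (g q.1) * F (f q.1) * f q.2)
          - ∑ i, ((1/2) * Aq g f F i q + (1/2) * Bq g f F i q + Raq g f F i q) :=
      funext fun q => by rw [hptw q]; ring
    rw [he]
    exact (int_phif1.sub int_phif2).sub int_main
  have hTpres : ∀ i : Fin N, MeasurePreserving (⇑(TEquiv i)) (μ.prod μ) (μ.prod μ) :=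
    fun i => measurePreserving_Tmap ν i
  have hTcomm : ∀ i j : Fin N, i ≠ j → ∀ q, TEquiv i (TEquiv j q) = TEquiv j (TEquiv i q) :=
    fun i j hij q => Tmap_comm hij q
  have hsymint : ∫ q, (∑ i, wq g f F i q) ∂(μ.prod μ)
      = ∑ i : Fin N, ∫ q, (wq g f F i q + wq g f F i (Tmap i q)) / 2 ∂(μ.prod μ) :=
    integral_sum_symmetrize TEquiv hTpres hTcomm Finset.univ (fun i => wq g f F i)
      (fun i _ => int_sym i) int_wsum
  have hsplitsum : ∀ i ∈ Finset.univ, ∫ q, ((1/2) * Aq g f F i q + (1/2) * Bq g f F i q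
        + Raq g f F i q) ∂(μ.prod μ)
      = (1/2) * ∫ q, Aq g f F i q ∂(μ.prod μ)
        + (1/2) * ∫ q, Bq g f F i q ∂(μ.prod μ) + ∫ q, Raq g f F i q ∂(μ.prod μ) := by
    intro i _
    have iA2 : Integrable (fun q => (1/2) * Aq g f F i q) (μ.prod μ) := (int_A i).const_mul _
    have iB2 : Integrable (fun q => (1/2) * Bq g f F i q) (μ.prod μ) := (int_B i).const_mul _
    have iAB : Integrable (fun q => (1/2) * Aq g f F i q + (1/2) * Bq g f F i q) (μ.prod μ) :=
      iA2.add iB2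
    rw [integral_add iAB (int_Ra i), integral_add iA2 iB2,
      integral_const_mul, integral_const_mul]
  have hsplit : ∫ q, (Real.exp (g q.1) * F (f q.1) * f q.1
        - Real.exp (g q.1) * F (f q.1) * f q.2) ∂(μ.prod μ)
      = (1/2) * (∑ i, ∫ q, Aq g f F i q ∂(μ.prod μ))
        + (1/2) * (∑ i, ∫ q, Bq g f F i q ∂(μ.prod μ))
        + (∑ i, ∫ q, Raq g f F i q ∂(μ.prod μ))
        + ∑ i, ∫ q, (wq g f F i q + wq g f F i (Tmap i q)) / 2 ∂(μ.prod μ) := by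
    rw [show (fun q => Real.exp (g q.1) * F (f q.1) * f q.1
        - Real.exp (g q.1) * F (f q.1) * f q.2)
        = fun q => (∑ i, ((1/2) * Aq g f F i q + (1/2) * Bq g f F i q + Raq g f F i q))
          + ∑ i, wq g f F i q from funext hptw]
    rw [integral_add int_main int_wsum, hsymint,
      integral_finset_sum _ (fun i _ => int_main_i i),
      Finset.sum_congr rfl hsplitsum, Finset.sum_add_distrib, Finset.sum_add_distrib,
      ← Finset.mul_sum, ← Finset.mul_sum]
  -- the exact error representation
  have hterm1 : termI1 μ g f F = (2*a)⁻¹ * ∑ i, ∫ q, Aq g f F i q ∂(μ.prod μ) := rfl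
  have hterm2 : termI2 μ g f F = (2*a)⁻¹ * ∑ i, ∫ q, Bq g f F i q ∂(μ.prod μ) := rfl
  have htermI : termI μ g f F
      = a⁻¹ * ∫ x, (f x - ∫ x', f x' ∂μ) * Real.exp (g x) * F (f x) ∂μ := rfl
  have hfinal : termI μ g f F - termI1 μ g f F - termI2 μ g f F
      = a⁻¹ * ((∑ i, ∫ q, Raq g f F i q ∂(μ.prod μ))
        + ∑ i, ∫ q, (wq g f F i q + wq g f F i (Tmap i q)) / 2 ∂(μ.prod μ)) := by
    rw [htermI, hterm1, hterm2, hJ, hsplit]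
    have h2a : (2*a)⁻¹ = a⁻¹ * (1/2) := by
      rw [mul_inv]; ring
    rw [h2a]
    generalize (∑ i : Fin N, ∫ q, Aq g f F i q ∂(μ.prod μ)) = SA
    generalize (∑ i : Fin N, ∫ q, Bq g f F i q ∂(μ.prod μ)) = SB
    generalize (∑ i : Fin N, ∫ q, Raq g f F i q ∂(μ.prod μ)) = SR
    generalize (∑ i : Fin N, ∫ q, (wq g f F i q + wq g f F i (Tmap i q)) / 2 ∂(μ.prod μ)) = SW
    ring
  -- bounds
  have hnn_a : ∀ i : Fin N, 0 ≤ ∫ q, delta1aFn g f i q ∂(μ.prod μ) := fun i =>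
    integral_nonneg fun q => by
      have : delta1aFn g f i q = Real.exp (g q.1) * (f q.1 - f (swapVec i q.1 q.2)) ^ 2 *
        |f (mixVec ((i : ℕ) + 1) q.1 q.2) - f (mixVec (i : ℕ) q.1 q.2)| := rfl
      rw [this]; positivity
  have hnn_b : ∀ i : Fin N, 0 ≤ ∫ q, delta1bFn g f i q ∂(μ.prod μ) := fun i =>
    integral_nonneg fun q => by
      have : delta1bFn g f i q = Real.exp (g q.1) * Real.exp |g q.1 - g (swapVec i q.1 q.2)| *
          (g q.1 - g (swapVec i q.1 q.2)) ^ 2 *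
          (|g q.1 - g (swapVec i q.1 q.2)| + |f q.1 - f (swapVec i q.1 q.2)|) *
          |f (mixVec ((i : ℕ) + 1) q.1 q.2) - f (mixVec (i : ℕ) q.1 q.2)| := rfl
      rw [this]; positivity
  have habs1 : ∀ i : Fin N, |∫ q, Raq g f F i q ∂(μ.prod μ)|
      ≤ ∫ q, delta1aFn g f i q ∂(μ.prod μ) := fun i =>
    (abs_integral_le _ _).trans
      (integral_mono (int_Ra i).abs (hδa i) fun q => Ra_bound hFd hF'd hF''b i q)
  have habs2 : ∀ i : Fin N, |∫ q, (wq g f F i q + wq g f F i (Tmap i q)) / 2 ∂(μ.prod μ)|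
      ≤ 4 * ∫ q, delta1bFn g f i q ∂(μ.prod μ) := by
    intro i
    have h1 : |∫ q, (wq g f F i q + wq g f F i (Tmap i q)) / 2 ∂(μ.prod μ)|
        ≤ ∫ q, 4 * delta1bFn g f i q ∂(μ.prod μ) :=
      (abs_integral_le _ _).trans
        (integral_mono (int_sym i).abs ((hδb i).const_mul 4)
          fun q => sym_bound hFd hFb hF'b i q)
    rwa [integral_const_mul] at h1
  have hdelta1 : delta1 μ g f = a⁻¹ * (∑ i, ∫ q, delta1aFn g f i q ∂(μ.prod μ))
      + a⁻¹ * (∑ i, ∫ q, delta1bFn g f i q ∂(μ.prod μ)) := rfl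
  rw [hfinal, hdelta1]
  have hainv : 0 < a⁻¹ := inv_pos.mpr ha
  have hbig : |(∑ i, ∫ q, Raq g f F i q ∂(μ.prod μ))
      + ∑ i, ∫ q, (wq g f F i q + wq g f F i (Tmap i q)) / 2 ∂(μ.prod μ)|
      ≤ (∑ i, ∫ q, delta1aFn g f i q ∂(μ.prod μ))
        + 4 * ∑ i, ∫ q, delta1bFn g f i q ∂(μ.prod μ) := by
    refine (abs_add_le _ _).trans ?_
    have t1 : |∑ i, ∫ q, Raq g f F i q ∂(μ.prod μ)|
        ≤ ∑ i, ∫ q, delta1aFn g f i q ∂(μ.prod μ) :=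
      (Finset.abs_sum_le_sum_abs _ _).trans (Finset.sum_le_sum fun i _ => habs1 i)
    have t2 : |∑ i, ∫ q, (wq g f F i q + wq g f F i (Tmap i q)) / 2 ∂(μ.prod μ)|
        ≤ 4 * ∑ i, ∫ q, delta1bFn g f i q ∂(μ.prod μ) := by
      rw [Finset.mul_sum]
      exact (Finset.abs_sum_le_sum_abs _ _).trans (Finset.sum_le_sum fun i _ => habs2 i)
    linarith
  have hsa : 0 ≤ ∑ i, ∫ q, delta1aFn g f i q ∂(μ.prod μ) :=
    Finset.sum_nonneg fun i _ => hnn_a i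
  have hsb : 0 ≤ ∑ i, ∫ q, delta1bFn g f i q ∂(μ.prod μ) :=
    Finset.sum_nonneg fun i _ => hnn_b i
  rw [abs_mul, abs_of_pos hainv]
  have hfin : a⁻¹ * |(∑ i, ∫ q, Raq g f F i q ∂(μ.prod μ))
      + ∑ i, ∫ q, (wq g f F i q + wq g f F i (Tmap i q)) / 2 ∂(μ.prod μ)|
      ≤ a⁻¹ * ((∑ i, ∫ q, delta1aFn g f i q ∂(μ.prod μ))
        + 4 * ∑ i, ∫ q, delta1bFn g f i q ∂(μ.prod μ)) :=
    mul_le_mul_of_nonneg_left hbig hainv.le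
  refine hfin.trans ?_
  nlinarith [mul_le_mul_of_nonneg_left hsa hainv.le, mul_le_mul_of_nonneg_left hsb hainv.le,
    mul_nonneg hainv.le hsa, mul_nonneg hainv.le hsb]
end
end

section
/- There is an absolute constant C such that the following holds. In the setting of the nonlinear exponential family below, let F : ℝ → ℝ be differentiable with ‖F‖_∞ ≤ 2 and ‖F'‖_∞ ≤ 2, and define I₁ = (1/(2a)) Σ_{i=1}^N E[h(X) F'(f(X)) (f(X) − f(X^(i))) (f(X^[i]) − f(X^[i−1]))]. Then |I₁ − b · E F'(f(Y))| ≤ C δ₂. -/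
open MeasureTheory ProbabilityTheory Real

noncomputable section

/-- **Lemma 4.2**: `|I₁ − b E F'(f(Y))| ≤ C δ₂` for an absolute constant `C`. -/
theorem I1_bound :
    ∃ C : ℝ, 0 < C ∧
    ∀ (N : ℕ) (ν : Fin N → Measure ℝ),
      (∀ i, IsProbabilityMeasure (ν i)) →
      ∀ g f : (Fin N → ℝ) → ℝ,
      Measurable g → Measurable f →
      -- `a = E h(X) < ∞`
      Integrable (fun x => Real.exp (g x)) (Measure.pi ν) →
      -- `E f(Y) = 0`
      Integrable f (tiltedMeasure (Measure.pi ν) g) →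
      (∫ y, f y ∂(tiltedMeasure (Measure.pi ν) g)) = 0 →
      -- finiteness of `b` and `δ₂`
      Integrable (fun y => ∑ i, Delta1 (Measure.pi ν) f i y)
        (tiltedMeasure (Measure.pi ν) g) →
      MemLp (fun y => ∑ i, Delta1 (Measure.pi ν) f i y) 2
        (tiltedMeasure (Measure.pi ν) g) →
      -- the function `F`
      ∀ F : ℝ → ℝ,
      Differentiable ℝ F →
      (∀ x, |F x| ≤ 2) → (∀ x, |deriv F x| ≤ 2) →
      -- finiteness of `I₁` and of `E F'(f(Y))`
      (∀ i : Fin N, Integrable (fun q : (Fin N → ℝ) × (Fin N → ℝ) =>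
        Real.exp (g q.1) * deriv F (f q.1) * (f q.1 - f (swapVec i q.1 q.2)) *
          (f (mixVec ((i : ℕ) + 1) q.1 q.2) - f (mixVec (i : ℕ) q.1 q.2)))
        ((Measure.pi ν).prod (Measure.pi ν))) →
      Integrable (fun y => deriv F (f y)) (tiltedMeasure (Measure.pi ν) g) →
      -- conclusion
      |termI1 (Measure.pi ν) g f F -
          bConst (Measure.pi ν) g f *
            ∫ y, deriv F (f y) ∂(tiltedMeasure (Measure.pi ν) g)| ≤
        C * delta2c (Measure.pi ν) g f := by

  refine ⟨2, two_pos, ?_⟩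
  intro N ν hν g f hg hf hint hfY hfY0 hSint hS2 F hFdiff hFb hF'b hI1 hφint
  haveI : ∀ i, IsProbabilityMeasure (ν i) := hν
  set μ := Measure.pi ν with hμ
  set a := aConst μ g with ha
  set T := tiltedMeasure μ g with hTdef
  set S : (Fin N → ℝ) → ℝ := fun y => ∑ i, Delta1 μ f i y with hS
  set b := bConst μ g f with hb
  -- positivity of `a`
  have ha_pos : 0 < a := by
    rw [ha, aConst]
    rw [integral_pos_iff_support_of_nonneg (fun x => (Real.exp_pos _).le) hint]
    have hsupp : Function.support (fun x => Real.exp (g x)) = Set.univ :=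
      Set.eq_univ_of_forall fun x => (Real.exp_pos _).ne'
    rw [hsupp]
    simp
  -- the tilted integral formula
  have hdens_meas : Measurable fun x => (Real.exp (g x) / a).toNNReal :=
    ((Real.measurable_exp.comp hg).div_const a).real_toNNReal
  have htilt : ∀ φ : (Fin N → ℝ) → ℝ,
      ∫ y, φ y ∂T = ∫ x, (Real.exp (g x) / a) * φ x ∂μ := by
    intro φ
    rw [hTdef, tiltedMeasure]
    rw [show (fun x => ENNReal.ofReal (Real.exp (g x) / aConst μ g)) =
        (fun x => ((Real.exp (g x) / a).toNNReal : ENNReal)) from rfl]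
    rw [integral_withDensity_eq_integral_smul hdens_meas]
    refine integral_congr_ae (ae_of_all _ fun x => ?_)
    simp only [NNReal.smul_def, smul_eq_mul]
    rw [Real.coe_toNNReal _ (by positivity)]
  -- `T` is a probability measure
  have hrho_int : Integrable (fun x => Real.exp (g x) / a) μ := hint.div_const a
  haveI hTprob : IsProbabilityMeasure T := by
    constructor
    rw [hTdef, tiltedMeasure, withDensity_apply _ MeasurableSet.univ, Measure.restrict_univ]
    rw [show (fun x => ENNReal.ofReal (Real.exp (g x) / aConst μ g)) =
        (fun x => ENNReal.ofReal (Real.exp (g x) / a)) from rfl]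
    rw [← ofReal_integral_eq_lintegral_ofReal hrho_int (ae_of_all _ fun x => by positivity)]
    rw [integral_div, show (∫ x, Real.exp (g x) ∂μ) = a from rfl, div_self ha_pos.ne']
    simp
  -- rewrite each product integral
  have hstep : ∀ i : Fin N, (∫ q : (Fin N → ℝ) × (Fin N → ℝ), Real.exp (g q.1) *
        deriv F (f q.1) * (f q.1 - f (swapVec i q.1 q.2)) *
        (f (mixVec ((i : ℕ) + 1) q.1 q.2) - f (mixVec (i : ℕ) q.1 q.2)) ∂(μ.prod μ))
      = ∫ x, Real.exp (g x) * deriv F (f x) * (2 * Delta1 μ f i x) ∂μ := by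
    intro i
    rw [integral_prod _ (hI1 i)]
    refine integral_congr_ae (ae_of_all _ fun x => ?_)
    have hpt : ∀ x' : Fin N → ℝ, Real.exp (g x) * deriv F (f x) *
        (f x - f (swapVec i x x')) *
        (f (mixVec ((i : ℕ) + 1) x x') - f (mixVec (i : ℕ) x x'))
        = (Real.exp (g x) * deriv F (f x)) * ((f x - f (swapVec i x x')) *
          (f (mixVec ((i : ℕ) + 1) x x') - f (mixVec (i : ℕ) x x'))) := fun x' => by ring
    simp_rw [hpt, integral_const_mul, Delta1]
    ring
  have hmarg : ∀ i : Fin N,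
      Integrable (fun x => Real.exp (g x) * deriv F (f x) * (2 * Delta1 μ f i x)) μ := by
    intro i
    refine ((hI1 i).integral_prod_left).congr (ae_of_all _ fun x => ?_)
    have hpt : ∀ x' : Fin N → ℝ, Real.exp (g x) * deriv F (f x) *
        (f x - f (swapVec i x x')) *
        (f (mixVec ((i : ℕ) + 1) x x') - f (mixVec (i : ℕ) x x'))
        = (Real.exp (g x) * deriv F (f x)) * ((f x - f (swapVec i x x')) *
          (f (mixVec ((i : ℕ) + 1) x x') - f (mixVec (i : ℕ) x x'))) := fun x' => by ring
    simp_rw [hpt, integral_const_mul, Delta1]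
    ring
  -- key identity : `I₁ = ∫ F'(f y) S y dT`
  have hsum : ∀ x, (∑ i, Real.exp (g x) * deriv F (f x) * (2 * Delta1 μ f i x))
      = 2 * (Real.exp (g x) * (deriv F (f x) * S x)) := by
    intro x
    simp only [hS, Finset.mul_sum]
    exact Finset.sum_congr rfl fun i _ => by ring
  have hkey : termI1 μ g f F = ∫ y, deriv F (f y) * S y ∂T := by
    rw [termI1]
    simp_rw [hstep]
    rw [← integral_finset_sum _ (fun i _ => hmarg i)]
    simp_rw [hsum, integral_const_mul]
    rw [htilt (fun y => deriv F (f y) * S y)]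
    have hpt : ∀ x, Real.exp (g x) / a * (deriv F (f x) * S x)
        = a⁻¹ * (Real.exp (g x) * (deriv F (f x) * S x)) := fun x => by ring
    simp_rw [hpt, integral_const_mul]
    rw [show aConst μ g = a from rfl, mul_inv]
    ring
  -- integrability facts on `T`
  have hφmeas : AEStronglyMeasurable (fun y => deriv F (f y)) T :=
    ((measurable_deriv F).comp hf).aestronglyMeasurable
  have hφbdd : ∀ᵐ y ∂T, ‖deriv F (f y)‖ ≤ 2 := ae_of_all _ fun y => hF'b (f y)
  have hφS_int : Integrable (fun y => deriv F (f y) * S y) T :=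
    hSint.bdd_mul hφmeas hφbdd
  have hSb_int : Integrable (fun y => S y - b) T := hSint.sub (integrable_const b)
  have hφSb_int : Integrable (fun y => deriv F (f y) * (S y - b)) T :=
    hSb_int.bdd_mul hφmeas hφbdd
  -- splitting
  have hsplit : ∫ y, deriv F (f y) * (S y - b) ∂T
      = termI1 μ g f F - b * ∫ y, deriv F (f y) ∂T := by
    rw [hkey]
    have hpt : ∀ y, deriv F (f y) * (S y - b)
        = deriv F (f y) * S y - deriv F (f y) * b := fun y => by ring
    simp_rw [hpt]
    rw [integral_sub hφS_int (hφint.mul_const b), integral_mul_const]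
    ring
  -- variance identity
  have hbT : b = ∫ y, S y ∂T := rfl
  have hvar : variance S T = ∫ y, (S y - b) ^ 2 ∂T := by
    rw [variance_eq_integral hS2.aemeasurable]
    refine integral_congr_ae (ae_of_all _ fun y => ?_)
    simp [hbT]
  -- L¹ ≤ L² (Cauchy–Schwarz)
  have hSb2 : MemLp (fun y => S y - b) 2 T := hS2.sub (memLp_const _)
  have habs2 : MemLp (fun y => |S y - b|) 2 T := hSb2.abs
  have hconj : (2 : ℝ).HolderConjugate 2 := Real.HolderConjugate.two_two
  have h2 : ENNReal.ofReal (2 : ℝ) = 2 := by simp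
  have hholder := integral_mul_le_Lp_mul_Lq_of_nonneg (μ := T) hconj
    (f := fun y => |S y - b|) (g := fun _ => (1 : ℝ))
    (ae_of_all _ fun y => abs_nonneg _) (ae_of_all _ fun y => zero_le_one)
    (h2 ▸ habs2) (h2 ▸ memLp_const 1)
  have hsq : ∀ t : ℝ, |t| ^ (2 : ℝ) = t ^ 2 := fun t => by
    rw [show (2 : ℝ) = ((2 : ℕ) : ℝ) by norm_num, Real.rpow_natCast, sq_abs]
  simp only [mul_one, Real.one_rpow, integral_const, measure_univ, ENNReal.toReal_one,
    one_smul, smul_eq_mul, hsq, probReal_univ] at hholder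
  have hholder' : ∫ y, |S y - b| ∂T ≤ Real.sqrt (∫ y, (S y - b) ^ 2 ∂T) := by
    rw [Real.sqrt_eq_rpow]
    exact hholder
  -- final chain
  have hd2 : delta2c μ g f = Real.sqrt (∫ y, (S y - b) ^ 2 ∂T) := by
    rw [delta2c, hvar]
  calc |termI1 μ g f F - b * ∫ y, deriv F (f y) ∂T|
      = |∫ y, deriv F (f y) * (S y - b) ∂T| := by rw [hsplit]
    _ ≤ ∫ y, |deriv F (f y) * (S y - b)| ∂T := by
        have h := norm_integral_le_integral_norm (μ := T)
          (fun y => deriv F (f y) * (S y - b))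
        simp only [Real.norm_eq_abs] at h
        exact h
    _ ≤ ∫ y, 2 * |S y - b| ∂T := by
        refine integral_mono hφSb_int.abs (hSb_int.abs.const_mul 2) fun y => ?_
        rw [abs_mul]
        exact mul_le_mul_of_nonneg_right (hF'b _) (abs_nonneg _)
    _ = 2 * ∫ y, |S y - b| ∂T := integral_const_mul 2 _
    _ ≤ 2 * Real.sqrt (∫ y, (S y - b) ^ 2 ∂T) := by linarith [hholder']
    _ = 2 * delta2c μ g f := by rw [hd2]
end
end
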